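/- For every natural number n, the folding construction satisfies the recursive pattern of the unfolding construction: dragonF (n+1) = dragonF n ++ [L] ++ List.map inv (List.reverse (dragonF n)). -/

import Mathlib

inductive Turn : Type
  | L
  | R
deriving DecidableEq
open Turn
def inv : Turn → Turn
  | L => R
  | R => L
def interleave {α : Type*} : Stream' α → List α → List α
  | zs, [] => [zs.head]
  | zs, y :: ys => zs.head :: y :: interleave zs.tail ys
infixr:67 " ▷ " => interleave
def lr : Stream' Turn := fun n => if n % 2 = 0 then L else R
def rl : Stream' Turn := fun n => if n % 2 = 0 then R else L
def dragonF : ℕ → List Turn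
  | 0 => []
  | n + 1 => lr ▷ dragonF n

theorem interleave_ext {α : Type*} : ∀ (ys : List α) (zs ws : Stream' α),
    (∀ i ≤ ys.length, zs i = ws i) → zs ▷ ys = ws ▷ ys
  | [], zs, ws, h => by
    show [zs.head] = [ws.head]
    rw [show zs.head = zs 0 from rfl, show ws.head = ws 0 from rfl, h 0 (by simp)]
  | y :: ys, zs, ws, h => by
    show zs.head :: y :: (zs.tail ▷ ys) = ws.head :: y :: (ws.tail ▷ ys)
    rw [show zs.head = zs 0 from rfl, show ws.head = ws 0 from rfl, h 0 (by simp),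
      interleave_ext ys zs.tail ws.tail (fun i hi => h (i + 1) (by simp; omega))]

theorem interleave_append {α : Type*} : ∀ (xs : List α) (zs : Stream' α) (a : α) (ys : List α),
    zs ▷ (xs ++ a :: ys) = (zs ▷ xs) ++ a :: (Stream'.drop (xs.length + 1) zs ▷ ys)
  | [], zs, a, ys => by
    show zs.head :: a :: (zs.tail ▷ ys) = [zs.head] ++ a :: (Stream'.drop 1 zs ▷ ys)
    rfl
  | x :: xs, zs, a, ys => by
    show zs.head :: x :: (zs.tail ▷ (xs ++ a :: ys)) = _
    rw [interleave_append xs zs.tail a ys]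
    rfl

theorem interleave_concat {α : Type*} (xs : List α) (zs : Stream' α) (a : α) :
    zs ▷ (xs ++ [a]) = (zs ▷ xs) ++ [a, zs (xs.length + 1)] := by
  rw [interleave_append xs zs a []]
  show _ ++ a :: [Stream'.drop (xs.length + 1) zs 0] = _
  show _ ++ a :: [zs (0 + (xs.length + 1))] = _
  rw [Nat.zero_add]

theorem map_inv_reverse_interleave : ∀ (ys : List Turn) (zs : Stream' Turn),
    List.map inv (List.reverse (zs ▷ ys))
      = (fun i => inv (zs (ys.length - i))) ▷ List.map inv (List.reverse ys)
  | [], zs => by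
    show List.map inv (List.reverse [zs.head]) = [inv (zs (0 - 0))]
    rfl
  | y :: ys, zs => by
    show List.map inv (List.reverse (zs.head :: y :: (zs.tail ▷ ys))) = _
    rw [List.reverse_cons, List.reverse_cons, List.map_append, List.map_append,
      map_inv_reverse_interleave ys zs.tail]
    have hlen : (List.map inv (List.reverse ys)).length = ys.length := by simp
    have hrhs : (fun i => inv (zs ((y :: ys).length - i))) ▷ List.map inv (List.reverse (y :: ys))
        = ((fun i => inv (zs (ys.length + 1 - i))) ▷ List.map inv (List.reverse ys))
          ++ [inv y, inv (zs 0)] := by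
      rw [List.reverse_cons, List.map_append]
      show (fun i => inv (zs (ys.length + 1 - i))) ▷ (List.map inv (List.reverse ys) ++ [inv y]) = _
      rw [interleave_concat (List.map inv (List.reverse ys)) (fun i => inv (zs (ys.length + 1 - i))), hlen]
      simp
    rw [hrhs]
    rw [interleave_ext (List.map inv (List.reverse ys))
      (fun i => inv (zs.tail (ys.length - i))) (fun i => inv (zs (ys.length + 1 - i)))
      (by intro i hi; rw [hlen] at hi
          show inv (zs (ys.length - i + 1)) = inv (zs (ys.length + 1 - i))
          rw [show ys.length - i + 1 = ys.length + 1 - i by omega])]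
    simp [Stream'.head, Stream'.get]

theorem key (ys : List Turn) :
    List.map inv (List.reverse (lr ▷ ys))
      = Stream'.drop (ys.length + 1) lr ▷ List.map inv (List.reverse ys) := by
  rw [map_inv_reverse_interleave]
  apply interleave_ext
  intro i hi
  simp only [List.length_map, List.length_reverse] at hi
  show inv (lr (ys.length - i)) = lr (i + (ys.length + 1))
  unfold lr
  rcases Nat.mod_two_eq_zero_or_one (ys.length - i) with h | h
  · rw [if_pos h, if_neg (show ¬ (i + (ys.length + 1)) % 2 = 0 by omega)]
    rfl
  · rw [if_neg (show ¬ (ys.length - i) % 2 = 0 by omega),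
      if_pos (show (i + (ys.length + 1)) % 2 = 0 by omega)]
    rfl

theorem dragonF_succ_unfold (n : ℕ) :
    dragonF (n + 1) = dragonF n ++ [L] ++ List.map inv (List.reverse (dragonF n)) := by
  induction n with
  | zero => rfl
  | succ n ih =>
    show lr ▷ dragonF (n + 1) = _
    conv_rhs => rw [show dragonF (n + 1) = lr ▷ dragonF n from rfl]
    conv_lhs => rw [ih]
    rw [List.append_assoc, List.singleton_append, interleave_append, key,
      List.append_assoc, List.singleton_append]
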